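/- Let R be a commutative ring, let m ≥ 1 be a natural number, and define R-linear endomorphisms U and V of the ring of formal power series R[[q]] by: U takes a power series with n-th coefficient a_n to the power series with n-th coefficient a_{mn}, and V takes a power series with n-th coefficient a_n to the power series whose (mn)-th coefficient is a_n and whose other coefficients are 0. Then U ∘ V is the identity, and for all a, c ∈ R and every natural number k ≥ 1, the operator identity U^k ∘ (U + c·V − a)^k = (U² − a·U + c)^k holds, where a and c act as scalar multiplication. -/

import Mathlib

/-!
Since `U * V = 1`, left multiplication by `U` turns `X = U + c • V - a` into
`W = U ^ 2 - a • U + c`, and `U` commutes with the polynomial `W` in `U`. Hence the factors `U`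
can be moved past the `W`'s one at a time: `U ^ k * X ^ k = W ^ k`.
-/

theorem pow_mul_pow_eq_pow_of_mul_eq {M : Type*} [Monoid M] {u x w : M}
    (hux : u * x = w) (huw : Commute u w) (k : ℕ) : u ^ k * x ^ k = w ^ k := by
  induction k with
  | zero => simp
  | succ n ih =>
    calc u ^ (n + 1) * x ^ (n + 1) = u ^ n * (u * x) * x ^ n := by
          rw [pow_succ, pow_succ', mul_assoc, mul_assoc, mul_assoc]
      _ = w * (u ^ n * x ^ n) := by rw [hux, (huw.pow_left n).eq, mul_assoc]
      _ = w ^ (n + 1) := by rw [ih, pow_succ']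

section RightInverse

variable {R A : Type*} [CommSemiring R] [Ring A] [Algebra R A] {u v : A}

theorem mul_add_smul_sub_smul_one_of_mul_eq_one (huv : u * v = 1) (a c : R) :
    u * (u + c • v - a • 1) = u ^ 2 - a • u + c • 1 := by
  rw [mul_sub, mul_add, mul_smul_comm, mul_smul_comm, huv, mul_one, sq]
  abel

theorem commute_sq_sub_smul_add_smul_one (u : A) (a c : R) :
    Commute u (u ^ 2 - a • u + c • 1) :=
  (((Commute.refl u).pow_right 2).sub_right ((Commute.refl u).smul_right a)).add_right
    ((Commute.one_right u).smul_right c)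

theorem pow_mul_pow_add_smul_sub_smul_one_of_mul_eq_one (huv : u * v = 1) (a c : R) (k : ℕ) :
    u ^ k * (u + c • v - a • 1) ^ k = (u ^ 2 - a • u + c • 1) ^ k :=
  pow_mul_pow_eq_pow_of_mul_eq (mul_add_smul_sub_smul_one_of_mul_eq_one huv a c)
    (commute_sq_sub_smul_add_smul_one u a c) k

end RightInverse

theorem PowerSeries.linearMap_mul_eq_one_of_coeff {R : Type*} [CommSemiring R] {m : ℕ}
    {U V : Module.End R (PowerSeries R)}
    (hU : ∀ (f : PowerSeries R) (n : ℕ),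
      PowerSeries.coeff n (U f) = PowerSeries.coeff (m * n) f)
    (hV : ∀ (f : PowerSeries R) (n : ℕ),
      PowerSeries.coeff (m * n) (V f) = PowerSeries.coeff n f) :
    U * V = 1 :=
  LinearMap.ext fun f => PowerSeries.ext fun n => by
    rw [Module.End.mul_apply, hU, hV, Module.End.one_apply]

theorem stmt_11_general (R : Type) [CommRing R] (m : ℕ)
    (U V : Module.End R (PowerSeries R))
    (hU : ∀ (f : PowerSeries R) (n : ℕ),
      PowerSeries.coeff n (U f) = PowerSeries.coeff (m * n) f)
    (hV : ∀ (f : PowerSeries R) (n : ℕ),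
      PowerSeries.coeff (m * n) (V f) = PowerSeries.coeff n f) :
    U * V = 1 ∧
      ∀ (a c : R) (k : ℕ), 1 ≤ k →
        U ^ k * (U + c • V - a • (1 : Module.End R (PowerSeries R))) ^ k
          = (U ^ 2 - a • U + c • (1 : Module.End R (PowerSeries R))) ^ k := by
  have hUV : U * V = 1 := PowerSeries.linearMap_mul_eq_one_of_coeff hU hV
  exact ⟨hUV, fun a c k _ => pow_mul_pow_add_smul_sub_smul_one_of_mul_eq_one hUV a c k⟩

/-- Let `U` and `V` be the `R`-linear endomorphisms of `R[[q]]` given on coefficients by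
`U : aₙ ↦ a_{mn}` (coefficient extraction along multiples of `m`) and `V` (spreading the `n`-th
coefficient to the `mn`-th spot, with all other coefficients zero). Then `U ∘ V = 1` and, for all
`a c : R` and `k ≥ 1`, the operator identity `U^k ∘ (U + c·V - a)^k = (U² - a·U + c)^k` holds. -/
theorem stmt_11 (R : Type) [CommRing R] (m : ℕ) (hm : 1 ≤ m)
    (U V : Module.End R (PowerSeries R))
    (hU : ∀ (f : PowerSeries R) (n : ℕ),
      PowerSeries.coeff n (U f) = PowerSeries.coeff (m * n) f)
    (hV : ∀ (f : PowerSeries R) (n : ℕ),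
      PowerSeries.coeff (m * n) (V f) = PowerSeries.coeff n f)
    (hV0 : ∀ (f : PowerSeries R) (j : ℕ), ¬ m ∣ j → PowerSeries.coeff j (V f) = 0) :
    U * V = 1 ∧
      ∀ (a c : R) (k : ℕ), 1 ≤ k →
        U ^ k * (U + c • V - a • (1 : Module.End R (PowerSeries R))) ^ k
          = (U ^ 2 - a • U + c • (1 : Module.End R (PowerSeries R))) ^ k :=
  stmt_11_general R m U V hU hV
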